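/- arXiv:0904.0715 — 2 statements merged into one kernel-verified Lean document; each statement's English description precedes it below -/
import Mathlib

section
/- Let β > 0 and let (I_x)_{x∈ℤ} be real parameters. For all integers m < n and all integers r with 0 ≤ r ≤ n − m + 1, the crystal partition functions satisfy the system of recursive equations X^r_{m,n} = X^r_{m,n−1} + e^{−β I_{n+1}}·Y^{r−1}_{m,n−1} and Y^r_{m,n} = Y^{r−1}_{m,n−1} + e^{−β I_{n+1}}·X^r_{m,n−1}, with the conventions X^s_{m,n'} = 0 and Y^s_{m,n'} = 0 whenever s < 0 or s > n' − m + 1. -/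
open Finset

/-- Spin configurations on the box `[m, n] ⊆ ℤ`, encoded as boolean functions
(`true` ↔ spin `+1`, `false` ↔ spin `-1`). -/
abbrev Config (m n : ℤ) := {x // x ∈ Finset.Icc m n} → Bool

/-- The spin value `±1` of the configuration `σ` at the site `x` (value `1` off the box). -/
noncomputable def spin {m n : ℤ} (σ : Config m n) (x : ℤ) : ℝ :=
  if h : x ∈ Finset.Icc m n then (if σ ⟨x, h⟩ then 1 else -1) else 1

/-- The number `N_+(σ)` of sites where `σ` takes the value `+1`. -/
noncomputable def Nplus {m n : ℤ} (σ : Config m n) : ℕ :=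
  (Finset.univ.filter fun x => σ x = true).card

/-- The Hamiltonian `H^-` on `[m, n]` with minus boundary spin on both sides. -/
noncomputable def Hminus (I : ℤ → ℝ) (m n : ℤ) (σ : Config m n) : ℝ :=
  (∑ x ∈ Finset.Icc (m + 1) n, I x * (if spin σ (x - 1) ≠ spin σ x then 1 else 0))
    + I m * (if spin σ m ≠ -1 then 1 else 0)
    + I (n + 1) * (if spin σ n ≠ -1 then 1 else 0)

/-- The Hamiltonian `H^∓` on `[m, n]`: minus boundary spin on the left,
plus boundary spin on the right. -/
noncomputable def Hmp (I : ℤ → ℝ) (m n : ℤ) (σ : Config m n) : ℝ :=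
  (∑ x ∈ Finset.Icc (m + 1) n, I x * (if spin σ (x - 1) ≠ spin σ x then 1 else 0))
    + I m * (if spin σ m ≠ -1 then 1 else 0)
    + I (n + 1) * (if spin σ n ≠ 1 then 1 else 0)

/-- The crystal partition function `X^r_{m,n}` (minus boundary on both sides),
defined for every integer `r`; it vanishes automatically when `r < 0` or
`r > n - m + 1`. -/
noncomputable def X (β : ℝ) (I : ℤ → ℝ) (m n : ℤ) (r : ℤ) : ℝ :=
  ∑ σ ∈ Finset.univ.filter (fun σ : Config m n => (Nplus σ : ℤ) = r),
    Real.exp (-β * Hminus I m n σ)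

/-- The crystal partition function `Y^r_{m,n}` (minus boundary on the left,
plus on the right), defined for every integer `r`; it vanishes automatically
when `r < 0` or `r > n - m + 1`. -/
noncomputable def Y (β : ℝ) (I : ℤ → ℝ) (m n : ℤ) (r : ℤ) : ℝ :=
  ∑ σ ∈ Finset.univ.filter (fun σ : Config m n => (Nplus σ : ℤ) = r),
    Real.exp (-β * Hmp I m n σ)

/-!
Split off the last spin `σ n`. It acts as the right boundary spin seen by the configuration on
`[m, n - 1]`, so the remaining energy is `H^-` or `H^∓` on `[m, n - 1]` according as `σ n` is
`-1` or `+1`, and the bond from `n` to the boundary site `n + 1` adds `I (n + 1)` exactly when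
`σ n` differs from the prescribed boundary spin. A plus spin at `n` also lowers `N_+` by one.
-/

namespace Config

variable {m n : ℤ}

noncomputable def snoc (σ : Config m (n - 1)) (b : Bool) : Config m n :=
  fun x => if h : (x : ℤ) ∈ Icc m (n - 1) then σ ⟨x, h⟩ else b

noncomputable def snocEquiv (hmn : m ≤ n) : Config m (n - 1) × Bool ≃ Config m n where
  toFun p := snoc p.1 p.2
  invFun σ := (fun x => σ ⟨x, by have := mem_Icc.1 x.2; simp only [mem_Icc]; omega⟩,
    σ ⟨n, by simp only [mem_Icc]; omega⟩)
  left_inv := fun ⟨σ, b⟩ => by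
    refine Prod.ext (funext fun x => ?_) ?_
    · exact dif_pos x.2
    · exact dif_neg (by simp)
  right_inv σ := by
    funext x
    by_cases h : (x : ℤ) ∈ Icc m (n - 1)
    · exact dif_pos h
    · have hx : (x : ℤ) = n := by
        have := mem_Icc.1 x.2; simp only [mem_Icc, not_and_or, not_le] at h; omega
      exact (dif_neg h).trans (congrArg σ (Subtype.ext hx.symm))

theorem sum_eq_sum_snoc {M : Type*} [AddCommMonoid M] (hmn : m ≤ n) (f : Config m n → M) :
    ∑ σ, f σ = ∑ σ : Config m (n - 1), (f (snoc σ false) + f (snoc σ true)) := by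
  rw [← (snocEquiv hmn).sum_comp, Fintype.sum_prod_type]
  refine sum_congr rfl fun σ _ => ?_
  rw [Fintype.sum_bool, add_comm]
  rfl

theorem spin_snoc_of_le (σ : Config m (n - 1)) (b : Bool) {x : ℤ} (hx : x ≤ n - 1) :
    spin (snoc σ b) x = spin σ x := by
  by_cases hm : m ≤ x
  · have h : x ∈ Icc m (n - 1) := mem_Icc.2 ⟨hm, hx⟩
    rw [spin, dif_pos (mem_Icc.2 ⟨hm, by omega⟩), spin, dif_pos h, snoc, dif_pos h]
  · rw [spin, dif_neg (by simp [hm]), spin, dif_neg (by simp [hm])]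

theorem spin_snoc_self (hmn : m ≤ n) (σ : Config m (n - 1)) (b : Bool) :
    spin (snoc σ b) n = if b then 1 else -1 := by
  rw [spin, dif_pos (mem_Icc.2 ⟨hmn, le_rfl⟩), snoc, dif_neg (by simp)]

theorem Nplus_eq_card_spin_eq_one (σ : Config m n) :
    Nplus σ = #{x ∈ Icc m n | spin σ x = 1} := by
  refine card_bij (fun x _ => x.1) (fun x hx => ?_) (fun _ _ _ _ => Subtype.ext)
    (fun x hx => ?_)
  · simp_all [spin]
  · obtain ⟨hx, hσ⟩ := mem_filter.1 hx
    refine ⟨⟨x, hx⟩, mem_filter.2 ⟨mem_univ _, ?_⟩, rfl⟩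
    by_contra hb
    simp [spin, hx, hb] at hσ
    norm_num at hσ

theorem Nplus_snoc (hmn : m ≤ n) (σ : Config m (n - 1)) (b : Bool) :
    (Nplus (snoc σ b) : ℤ) = Nplus σ + b.toNat := by
  have hbulk : {x ∈ Icc m (n - 1) | spin (snoc σ b) x = 1} = {x ∈ Icc m (n - 1) | spin σ x = 1} :=
    filter_congr fun x hx => by rw [spin_snoc_of_le σ b (mem_Icc.1 hx).2]
  have hn : n ∉ {x ∈ Icc m (n - 1) | spin σ x = 1} := by simp
  rw [Nplus_eq_card_spin_eq_one, Nplus_eq_card_spin_eq_one, ← insert_Icc_sub_one_right_eq_Icc hmn,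
    filter_insert, spin_snoc_self hmn, hbulk]
  cases b <;> norm_num [card_insert_of_notMem hn]

theorem sum_filter_Nplus_eq {M : Type*} [AddCommMonoid M] (hmn : m ≤ n) (f : Config m n → M)
    (r : ℤ) :
    ∑ σ with (Nplus σ : ℤ) = r, f σ =
      ∑ σ : Config m (n - 1) with (Nplus σ : ℤ) = r, f (snoc σ false) +
        ∑ σ : Config m (n - 1) with (Nplus σ : ℤ) = r - 1, f (snoc σ true) := by
  simp only [sum_filter, sum_eq_sum_snoc hmn, ← sum_add_distrib, Nplus_snoc hmn]
  refine sum_congr rfl fun σ _ => ?_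
  congr 2
  simp [eq_sub_iff_add_eq]

variable (I : ℤ → ℝ) (hmn : m < n) (σ : Config m (n - 1))
include hmn

theorem sum_bonds_snoc (b : Bool) :
    ∑ x ∈ Icc (m + 1) n, I x * (if spin (snoc σ b) (x - 1) ≠ spin (snoc σ b) x then 1 else 0) =
      ∑ x ∈ Icc (m + 1) (n - 1), I x * (if spin σ (x - 1) ≠ spin σ x then 1 else 0) +
        I n * (if spin σ (n - 1) ≠ (if b then 1 else -1) then 1 else 0) := by
  rw [← insert_Icc_sub_one_right_eq_Icc (by omega : m + 1 ≤ n), sum_insert (by simp),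
    spin_snoc_of_le σ b le_rfl, spin_snoc_self hmn.le, add_comm]
  refine congrArg (· + _) (sum_congr rfl fun x hx => ?_)
  have hx := (mem_Icc.1 hx).2
  rw [spin_snoc_of_le σ b (by omega), spin_snoc_of_le σ b hx]

theorem Hminus_snoc_false : Hminus I m n (snoc σ false) = Hminus I m (n - 1) σ := by
  rw [Hminus, Hminus, sum_bonds_snoc I hmn, spin_snoc_of_le σ false (Int.le_sub_one_of_lt hmn),
    spin_snoc_self hmn.le]
  norm_num
  ring

theorem Hminus_snoc_true : Hminus I m n (snoc σ true) = Hmp I m (n - 1) σ + I (n + 1) := by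
  rw [Hminus, Hmp, sum_bonds_snoc I hmn, spin_snoc_of_le σ true (Int.le_sub_one_of_lt hmn),
    spin_snoc_self hmn.le]
  norm_num
  ring

theorem Hmp_snoc_false : Hmp I m n (snoc σ false) = Hminus I m (n - 1) σ + I (n + 1) := by
  rw [Hmp, Hminus, sum_bonds_snoc I hmn, spin_snoc_of_le σ false (Int.le_sub_one_of_lt hmn),
    spin_snoc_self hmn.le]
  norm_num
  ring

theorem Hmp_snoc_true : Hmp I m n (snoc σ true) = Hmp I m (n - 1) σ := by
  rw [Hmp, Hmp, sum_bonds_snoc I hmn, spin_snoc_of_le σ true (Int.le_sub_one_of_lt hmn),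
    spin_snoc_self hmn.le]
  norm_num
  ring

end Config

open Config

variable {m n : ℤ}

theorem exp_neg_mul_add (β H c : ℝ) :
    Real.exp (-β * (H + c)) = Real.exp (-β * c) * Real.exp (-β * H) := by
  rw [← Real.exp_add]
  ring_nf

theorem X_recurrence (β : ℝ) (I : ℤ → ℝ) (hmn : m < n) (r : ℤ) :
    X β I m n r = X β I m (n - 1) r + Real.exp (-β * I (n + 1)) * Y β I m (n - 1) (r - 1) := by
  simp only [X, Y, sum_filter_Nplus_eq hmn.le, Hminus_snoc_false I hmn, Hminus_snoc_true I hmn,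
    exp_neg_mul_add, mul_sum]

theorem Y_recurrence (β : ℝ) (I : ℤ → ℝ) (hmn : m < n) (r : ℤ) :
    Y β I m n r = Y β I m (n - 1) (r - 1) + Real.exp (-β * I (n + 1)) * X β I m (n - 1) r := by
  simp only [X, Y, sum_filter_Nplus_eq hmn.le, Hmp_snoc_false I hmn, Hmp_snoc_true I hmn,
    exp_neg_mul_add, mul_sum]
  exact add_comm _ _

theorem stmt_7_general (β : ℝ) (I : ℤ → ℝ)
    (m n : ℤ) (hmn : m < n) (r : ℤ) :
    X β I m n r = X β I m (n - 1) r + Real.exp (-β * I (n + 1)) * Y β I m (n - 1) (r - 1) ∧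
    Y β I m n r = Y β I m (n - 1) (r - 1) + Real.exp (-β * I (n + 1)) * X β I m (n - 1) r :=
  ⟨X_recurrence β I hmn r, Y_recurrence β I hmn r⟩

/-- The system of recursive equations (16) for the crystal partition functions
`X^r_{m,n}` and `Y^r_{m,n}` (here `X^s_{m,n'} = Y^s_{m,n'} = 0` automatically
whenever `s < 0` or `s > n' - m + 1`). -/
theorem stmt_7 (β : ℝ) (hβ : 0 < β) (I : ℤ → ℝ)
    (m n : ℤ) (hmn : m < n) (r : ℤ) (hr0 : 0 ≤ r) (hr1 : r ≤ n - m + 1) :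
    X β I m n r = X β I m (n - 1) r + Real.exp (-β * I (n + 1)) * Y β I m (n - 1) (r - 1) ∧
    Y β I m n r = Y β I m (n - 1) (r - 1) + Real.exp (-β * I (n + 1)) * X β I m (n - 1) r :=
  stmt_7_general β I m n hmn r
end

section
/- Let β > 0 and let (I_x)_{x∈ℤ} be real parameters. For all integers m and n with n ≥ m + 2, and all integers r with 1 ≤ r ≤ n − m + 1, the crystal partition function X^r_{m,n} satisfies the single recursive equation X^r_{m,n} = X^r_{m,n−1} + e^{−β(I_{n+1} − I_n)}·( X^{r−1}_{m,n−1} − X^{r−1}_{m,n−2} ) + e^{−β(I_n + I_{n+1})}·X^{r−1}_{m,n−2}, with the convention X^s_{m,n'} = 0 whenever s < 0 or s > n' − m + 1. -/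
open Finset

/-!
Splitting off the last spin gives a transfer-matrix recursion that couples `X` with the
partition function `Y` of plus boundary spin on the right:
`X^r_n = X^r_{n-1} + e^{-β I_{n+1}} Y^{r-1}_{n-1}` and
`Y^r_n = e^{-β I_{n+1}} X^r_{n-1} + Y^{r-1}_{n-1}`.
Eliminating `Y` between these recursions at `n` and at `n - 1` leaves an equation in `X` alone.
-/

noncomputable def boolSpin (s : Bool) : ℝ := if s then 1 else -1

noncomputable def extendConfig {m n : ℤ} (τ : Config m (n - 1)) (s : Bool) : Config m n :=
  fun x => if h : (x : ℤ) ∈ Icc m (n - 1) then τ ⟨x, h⟩ else s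

lemma notMem_Icc_sub_one (a b : ℤ) : b ∉ Icc a (b - 1) := by
  simp only [mem_Icc]; omega

lemma Nplus_eq_sum {m n : ℤ} (σ : Config m n) :
    (Nplus σ : ℤ) = ∑ x ∈ Icc m n, if spin σ x = 1 then 1 else 0 := by
  rw [Nplus, card_filter, univ_eq_attach, ← sum_attach (Icc m n)]
  push_cast
  refine sum_congr rfl fun x _ => ?_
  rw [spin, dif_pos x.2]
  cases σ x <;> norm_num

section extendConfig

variable {m n : ℤ} (τ : Config m (n - 1)) (s : Bool)

lemma spin_extendConfig_of_ne {x : ℤ} (hx : x ≠ n) :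
    spin (extendConfig τ s) x = spin τ x := by
  unfold spin extendConfig
  by_cases hx' : x ∈ Icc m (n - 1)
  · have hxn : x ∈ Icc m n := by simp only [mem_Icc] at hx' ⊢; omega
    rw [dif_pos hxn, dif_pos hx', dif_pos hx']
  · have hxn : x ∉ Icc m n := by simp only [mem_Icc] at hx' ⊢; omega
    rw [dif_neg hxn, dif_neg hx']

lemma spin_extendConfig_self (h : m ≤ n) : spin (extendConfig τ s) n = boolSpin s := by
  rw [spin, dif_pos (by simp [h]), extendConfig, dif_neg (notMem_Icc_sub_one m n), boolSpin]

lemma Nplus_extendConfig (h : m ≤ n) :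
    (Nplus (extendConfig τ s) : ℤ) = Nplus τ + s.toNat := by
  rw [Nplus_eq_sum, Nplus_eq_sum, ← insert_Icc_sub_one_right_eq_Icc h,
    sum_insert (notMem_Icc_sub_one m n), spin_extendConfig_self τ s h, add_comm]
  congr 1
  · refine sum_congr rfl fun x hx => ?_
    rw [spin_extendConfig_of_ne τ s (by simp only [mem_Icc] at hx; omega)]
  · cases s <;> norm_num [boolSpin]

end extendConfig

noncomputable def configEquivProd {m n : ℤ} (h : m ≤ n) :
    Config m n ≃ Config m (n - 1) × Bool where
  toFun σ := (fun x => σ ⟨x, by have := x.2; simp only [mem_Icc] at this ⊢; omega⟩,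
    σ ⟨n, by simp only [mem_Icc]; omega⟩)
  invFun p := extendConfig p.1 p.2
  left_inv σ := by
    funext x
    simp only [extendConfig]
    split
    · rfl
    · next hx =>
      have : (x : ℤ) = n := by have := x.2; simp only [mem_Icc] at this hx; omega
      exact congrArg σ (Subtype.ext this.symm)
  right_inv p := by
    ext x
    · simp only [extendConfig, dif_pos x.2]
    · simp only [extendConfig, dif_neg (notMem_Icc_sub_one m n)]

noncomputable def bondEnergy (I : ℤ → ℝ) (m n : ℤ) (σ : Config m n) : ℝ :=
  ∑ x ∈ Icc (m + 1) n, I x * if spin σ (x - 1) ≠ spin σ x then 1 else 0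

/-- `b` is the boundary spin at `n + 1`: `Hminus` and `Hmp` are the cases `b = -1` and `b = 1`. -/
noncomputable def hamiltonian (I : ℤ → ℝ) (m n : ℤ) (b : ℝ) (σ : Config m n) : ℝ :=
  bondEnergy I m n σ + I m * (if spin σ m ≠ -1 then 1 else 0)
    + I (n + 1) * if spin σ n ≠ b then 1 else 0

noncomputable def partitionFn (β : ℝ) (I : ℤ → ℝ) (m n : ℤ) (b : ℝ) (r : ℤ) : ℝ :=
  ∑ σ ∈ univ.filter (fun σ : Config m n => (Nplus σ : ℤ) = r),
    Real.exp (-β * hamiltonian I m n b σ)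

lemma X_eq_partitionFn (β : ℝ) (I : ℤ → ℝ) (m n r : ℤ) :
    X β I m n r = partitionFn β I m n (-1) r := rfl

lemma Y_eq_partitionFn (β : ℝ) (I : ℤ → ℝ) (m n r : ℤ) :
    Y β I m n r = partitionFn β I m n 1 r := rfl

section

variable {m n : ℤ} (h : m + 1 ≤ n) (τ : Config m (n - 1)) (s : Bool)
include h

lemma bondEnergy_extendConfig (I : ℤ → ℝ) :
    bondEnergy I m n (extendConfig τ s) =
      bondEnergy I m (n - 1) τ + I n * if spin τ (n - 1) ≠ boolSpin s then 1 else 0 := by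
  rw [bondEnergy, bondEnergy, ← insert_Icc_sub_one_right_eq_Icc h,
    sum_insert (notMem_Icc_sub_one _ n), spin_extendConfig_of_ne τ s (by omega : n - 1 ≠ n),
    spin_extendConfig_self τ s (by omega), add_comm]
  congr 1
  refine sum_congr rfl fun x hx => ?_
  simp only [mem_Icc] at hx
  rw [spin_extendConfig_of_ne τ s (by omega : x ≠ n),
    spin_extendConfig_of_ne τ s (by omega : x - 1 ≠ n)]

lemma hamiltonian_extendConfig (I : ℤ → ℝ) (b : ℝ) :
    hamiltonian I m n b (extendConfig τ s) =
      hamiltonian I m (n - 1) (boolSpin s) τ + I (n + 1) * if boolSpin s ≠ b then 1 else 0 := by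
  rw [hamiltonian, hamiltonian, bondEnergy_extendConfig h, sub_add_cancel,
    spin_extendConfig_of_ne τ s (by omega : m ≠ n), spin_extendConfig_self τ s (by omega)]
  ring

end

lemma partitionFn_eq_sum_bool (β : ℝ) (I : ℤ → ℝ) {m n : ℤ} (h : m + 1 ≤ n) (b : ℝ)
    (r : ℤ) :
    partitionFn β I m n b r = ∑ s : Bool,
      Real.exp (-β * (I (n + 1) * if boolSpin s ≠ b then 1 else 0)) *
        partitionFn β I m (n - 1) (boolSpin s) (r - s.toNat) := by
  simp only [partitionFn, sum_filter, mul_sum]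
  rw [← (configEquivProd (by omega : m ≤ n)).symm.sum_comp, Fintype.sum_prod_type, sum_comm]
  refine sum_congr rfl fun s _ => sum_congr rfl fun τ _ => ?_
  change ite ((Nplus (extendConfig τ s) : ℤ) = r)
    (Real.exp (-β * hamiltonian I m n b (extendConfig τ s))) 0 = _
  rw [Nplus_extendConfig τ s (by omega), hamiltonian_extendConfig h,
    mul_ite_zero (P := (Nplus τ : ℤ) = r - s.toNat), ← Real.exp_add]
  exact if_congr (by omega) (by ring_nf) rfl

lemma X_eq_add (β : ℝ) (I : ℤ → ℝ) {m n : ℤ} (h : m + 1 ≤ n) (r : ℤ) :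
    X β I m n r = X β I m (n - 1) r + Real.exp (-β * I (n + 1)) * Y β I m (n - 1) (r - 1) := by
  norm_num [X_eq_partitionFn, Y_eq_partitionFn, partitionFn_eq_sum_bool β I h, boolSpin]
  ring

lemma Y_eq_add (β : ℝ) (I : ℤ → ℝ) {m n : ℤ} (h : m + 1 ≤ n) (r : ℤ) :
    Y β I m n r = Real.exp (-β * I (n + 1)) * X β I m (n - 1) r + Y β I m (n - 1) (r - 1) := by
  norm_num [X_eq_partitionFn, Y_eq_partitionFn, partitionFn_eq_sum_bool β I h, boolSpin]
  ring

theorem stmt_8_general (β : ℝ) (I : ℤ → ℝ)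
    (m n : ℤ) (hmn : m + 2 ≤ n) (r : ℤ) :
    X β I m n r = X β I m (n - 1) r
        + Real.exp (-β * (I (n + 1) - I n)) * (X β I m (n - 1) (r - 1) - X β I m (n - 2) (r - 1))
        + Real.exp (-β * (I n + I (n + 1))) * X β I m (n - 2) (r - 1) := by
  have hX := X_eq_add β I (by omega : m + 1 ≤ n) r
  have hY := Y_eq_add β I (by omega : m + 1 ≤ n - 1) (r - 1)
  have hX' := X_eq_add β I (by omega : m + 1 ≤ n - 1) (r - 1)
  rw [sub_add_cancel, sub_sub, one_add_one_eq_two] at hY hX'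
  have hexp₁ : Real.exp (-β * (I (n + 1) - I n)) * Real.exp (-β * I n) =
      Real.exp (-β * I (n + 1)) := by
    rw [← Real.exp_add]; ring_nf
  have hexp₂ : Real.exp (-β * (I n + I (n + 1))) =
      Real.exp (-β * I n) * Real.exp (-β * I (n + 1)) := by
    rw [← Real.exp_add]; ring_nf
  linear_combination hX + Real.exp (-β * I (n + 1)) * hY
    - Real.exp (-β * (I (n + 1) - I n)) * hX'
    - Y β I m (n - 2) (r - 1 - 1) * hexp₁ - X β I m (n - 2) (r - 1) * hexp₂

/-- The single recursive equation (18) for the crystal partition function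
`X^r_{m,n}` (here `X^s_{m,n'} = 0` automatically whenever `s < 0` or
`s > n' - m + 1`). -/
theorem stmt_8 (β : ℝ) (hβ : 0 < β) (I : ℤ → ℝ)
    (m n : ℤ) (hmn : m + 2 ≤ n) (r : ℤ) (hr0 : 1 ≤ r) (hr1 : r ≤ n - m + 1) :
    X β I m n r = X β I m (n - 1) r
        + Real.exp (-β * (I (n + 1) - I n)) * (X β I m (n - 1) (r - 1) - X β I m (n - 2) (r - 1))
        + Real.exp (-β * (I n + I (n + 1))) * X β I m (n - 2) (r - 1) :=
  stmt_8_general β I m n hmn r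
end
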